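/- For every n ∈ ℕ and every x ∈ H_n: |||τ_n(x)|||_0 ≤ |||x|||_{N_n+1}. -/

import Mathlib

open scoped Classical in
/-- The function `Next` from Definition 4.1, defined from the sequence `(b_n)`. -/
noncomputable def nextFn (b : ℕ → ℕ) : ℕ × ℕ → ℕ × ℕ :=
  fun p =>
    if (∃ n : ℕ, 1 ≤ n ∧ p.1 = b n ∧ Even p.2 ∧ p.2 < 2 * n) ∨
       (∃ n : ℕ, 1 ≤ n ∧ p.1 = 2 * b n + 1 ∧ Odd p.2 ∧ 0 < p.2 ∧ p.2 ≤ 2 * n) ∨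
       (p.1 = 0 ∧ Odd p.2) then
      (p.1, p.2 + 1)
    else if (∃ n : ℕ, 1 ≤ n ∧ p.1 = b n + 1 ∧ Odd p.2 ∧ p.2 < 2 * n) ∨
        (∃ n : ℕ, 1 ≤ n ∧ p.1 = 2 * b n ∧ Even p.2 ∧ 0 < p.2 ∧ p.2 ≤ 2 * n) then
      (p.1, p.2 - 1)
    else if Even p.2 then (p.1 + 1, p.2)
    else (p.1 - 1, p.2)

/-- `enum k = Next^k (0, 0)`, the `k`-th element of the ordering of `ℕ × ℕ` defined by `Next`. -/
noncomputable def enum (b : ℕ → ℕ) (k : ℕ) : ℕ × ℕ := (nextFn b)^[k] (0, 0)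

/-- The basis vector `e_k = e_{n,m}` where `pos (n, m) = k`, in `s₀,₀^ℕ = ℕ × ℕ →₀ ℝ`. -/
noncomputable def eVec (b : ℕ → ℕ) (k : ℕ) : ℕ × ℕ →₀ ℝ := Finsupp.single (enum b k) 1

/-- `|(x_{i,j})_i|_N = Σ_i |x_{i,j}| A_{N,i}`, the `N`-th seminorm of the `j`-th column. -/
noncomputable def colNorm (A : ℕ → ℕ → ℝ) (N : ℕ) (x : ℕ × ℕ → ℝ) (j : ℕ) : ℝ :=
  ∑' i : ℕ, |x (i, j)| * A N i

/-- `‖x‖_N = Σ_{j ≤ N} |(x_{i,j})_i|_N`, the seminorms of `s^ℕ`. -/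
noncomputable def normK (A : ℕ → ℕ → ℝ) (N : ℕ) (x : ℕ × ℕ → ℝ) : ℝ :=
  ∑ j ∈ Finset.range (N + 1), colNorm A N x j

/-- `|||x|||_N = Σ_j |(x_{i,j})_i|_N`, the norms of `s₀^ℕ`. -/
noncomputable def norm3 (A : ℕ → ℕ → ℝ) (N : ℕ) (x : ℕ × ℕ → ℝ) : ℝ :=
  ∑' j : ℕ, colNorm A N x j

/-!
The orbit `F j = T^j e₀` is explicit, generation by generation (`q m = pos (Δ_m, 0)`,
`r m = pos (a_m, 0)`): `F j = α_j e_j` for `q m ≤ j < r m`, and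
`F (r m + t) = A_{N_m,a_m}⁻¹ e_{r m + t} + F t` for `t < q m`. Inverting these, every `e_k` is a
combination of `F j`, `j ≤ k`, and for `x = Σ_{k < q (n+1)} ξ_k e_k` one reads off
`τ_n x = Σ_{k < r n} ξ_k e_k - A_{N_n,a_n} Σ_{t < q n} ξ_{r n + t} F t`.
The head is controlled termwise because `A` increases in `N`. For the tail, the doubling
condition gives `|||F t|||₀ ≤ 4^t A_{0,0}`, and `e_{r n + t}` sits at `(a_n + t, 0)`, whose weight
`A_{N_n+1, a_n+t}` dominates `A_{N_n,a_n} 4^{q n} A_{0,0}` by hypothesis.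
-/

section Enumeration

variable (b : ℕ → ℕ)

theorem enum_succ (k : ℕ) : enum b (k + 1) = nextFn b (enum b k) :=
  Function.iterate_succ_apply' _ _ _

theorem fst_nextFn_le (p : ℕ × ℕ) : (nextFn b p).1 ≤ p.1 + 1 := by
  unfold nextFn
  split_ifs <;> simp only <;> omega

theorem fst_enum_le (k : ℕ) : (enum b k).1 ≤ k := by
  induction k with
  | zero => exact le_rfl
  | succ k ih => rw [enum_succ]; have := fst_nextFn_le b (enum b k); omega

theorem nextFn_of_forall_ne {i : ℕ} (hi : ∀ m, 1 ≤ m → i ≠ b m) :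
    nextFn b (i, 0) = (i + 1, 0) := by
  have h0 : ¬ Odd 0 := Nat.not_odd_zero
  rw [nextFn, if_neg, if_neg, if_pos Even.zero]
  · rintro (⟨m, -, -, h, -⟩ | ⟨m, -, -, -, h, -⟩)
    exacts [h0 h, lt_irrefl 0 h]
  · rintro (⟨m, hm, h, -⟩ | ⟨m, -, -, h, -⟩ | ⟨-, h⟩)
    exacts [hi m hm h, h0 h, h0 h]

theorem enum_add_of_forall_ne {k i t : ℕ} (hk : enum b k = (i, 0))
    (hi : ∀ u < t, ∀ m, 1 ≤ m → i + u ≠ b m) : enum b (k + t) = (i + t, 0) := by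
  induction t with
  | zero => exact hk
  | succ t ih =>
    rw [← Nat.add_assoc, enum_succ, ih fun u hu => hi u (by omega),
      nextFn_of_forall_ne b (hi t (by omega)), Nat.add_assoc]

end Enumeration

section WeightedNorm

variable (A : ℕ → ℕ → ℝ) (M : ℕ)

theorem norm3_eq_sum_of_support_subset {y : ℕ × ℕ →₀ ℝ} {S : Finset (ℕ × ℕ)}
    (hS : y.support ⊆ S) : norm3 A M y = ∑ p ∈ S, |y p| * A M p.1 := by
  have hzero : ∀ p ∉ S, |y p| * A M p.1 = 0 := fun p hp => by
    simp [Finsupp.notMem_support_iff.1 (fun h => hp (hS h))]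
  have hsum : Summable fun p : ℕ × ℕ => |y p| * A M p.1 := summable_of_ne_finset_zero hzero
  rw [← tsum_eq_sum (L := .unconditional _) hzero, hsum.tsum_prod]
  exact hsum.tsum_comm

theorem norm3_single (p : ℕ × ℕ) (c : ℝ) :
    norm3 A M (Finsupp.single p c) = |c| * A M p.1 := by
  rw [norm3_eq_sum_of_support_subset A M Finsupp.support_single_subset]
  simp

theorem norm3_eVec (b : ℕ → ℕ) (k : ℕ) : norm3 A M ⇑(eVec b k) = A M (enum b k).1 := by
  rw [eVec, norm3_single, abs_one, one_mul]

open Finset in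
theorem norm3_sum_smul_eVec {b : ℕ → ℕ} (hinj : Function.Injective (enum b)) (K : ℕ)
    (ξ : ℕ → ℝ) :
    norm3 A M ⇑(∑ k ∈ range K, ξ k • eVec b k) = ∑ k ∈ range K, |ξ k| * A M (enum b k).1 := by
  have hsingle : ∑ k ∈ range K, ξ k • eVec b k =
      ∑ k ∈ range K, Finsupp.single (enum b k) (ξ k) :=
    sum_congr rfl fun k _ => by rw [eVec, Finsupp.smul_single_one]
  have hsupp : (∑ k ∈ range K, Finsupp.single (enum b k) (ξ k)).support ⊆
      (range K).image (enum b) :=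
    Finsupp.support_finsetSum.trans (biUnion_subset.2 fun k hk =>
      Finsupp.support_single_subset.trans (singleton_subset_iff.2 (mem_image_of_mem _ hk)))
  rw [hsingle, norm3_eq_sum_of_support_subset A M hsupp, sum_image hinj.injOn]
  refine sum_congr rfl fun k hk => ?_
  simp [Finsupp.finsetSum_apply, Finsupp.single_apply, hinj.eq_iff, hk]

open Finset in
noncomputable def norm3Seminorm (hA : ∀ i, 0 ≤ A M i) : Seminorm ℝ (ℕ × ℕ →₀ ℝ) :=
  Seminorm.of (fun y => norm3 A M y)
    (fun y z => by
      classical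
      rw [norm3_eq_sum_of_support_subset A M (Finsupp.support_add (g₁ := y) (g₂ := z)),
        norm3_eq_sum_of_support_subset A M (subset_union_left (s₂ := z.support)),
        norm3_eq_sum_of_support_subset A M (subset_union_right (s₁ := y.support)),
        ← sum_add_distrib]
      exact sum_le_sum fun p _ => by
        rw [← add_mul]; exact mul_le_mul_of_nonneg_right (abs_add_le _ _) (hA p.1))
    (fun c y => by
      rw [norm3_eq_sum_of_support_subset A M (Finsupp.support_smul (b := c) (g := y)),
        norm3_eq_sum_of_support_subset A M subset_rfl, mul_sum]
      simp only [Finsupp.smul_apply, smul_eq_mul, abs_mul, Real.norm_eq_abs, mul_assoc])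

theorem norm3Seminorm_apply (hA : ∀ i, 0 ≤ A M i) (y : ℕ × ℕ →₀ ℝ) :
    norm3Seminorm A M hA y = norm3 A M y := rfl

end WeightedNorm

theorem le_two_pow_mul_of_le_two_mul {f : ℕ → ℝ} (hf : ∀ i, f (i + 1) ≤ 2 * f i) (i : ℕ) :
    f i ≤ 2 ^ i * f 0 := by
  induction i with
  | zero => simp
  | succ i ih => rw [pow_succ', mul_assoc]; linarith [hf i]

theorem norm3_eVec_le_two_pow_mul {A : ℕ → ℕ → ℝ} {M : ℕ} (hA : ∀ i, A M (i + 1) ≤ 2 * A M i)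
    (hA0 : 0 ≤ A M 0) (b : ℕ → ℕ) (k : ℕ) : norm3 A M ⇑(eVec b k) ≤ 2 ^ k * A M 0 := by
  rw [norm3_eVec]
  exact (le_two_pow_mul_of_le_two_mul hA _).trans
    (mul_le_mul_of_nonneg_right (pow_le_pow_right₀ one_le_two (fst_enum_le b k)) hA0)

theorem pow_succ_apply' {R M : Type*} [Semiring R] [AddCommMonoid M] [Module R M]
    (f : M →ₗ[R] M) (j : ℕ) (v : M) : (f ^ (j + 1)) v = f ((f ^ j) v) := by
  rw [pow_succ']; rfl

/-- The shape of the operator `T` on the basis `e_k`: the indices split into generations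
`[q m, q (m + 1))`, each cut at `r m`, where `q m = pos (Δ_m, 0)`, `r m = pos (a_m, 0)` and
`c m = A_{N_m, a_m}`. -/
structure IsGenerationOperator {K V : Type*} [Field K] [AddCommGroup V] [Module K V]
    (T : V →ₗ[K] V) (e : ℕ → V) (α c : ℕ → K) (q r : ℕ → ℕ) : Prop where
  q_zero : q 0 = 1
  q_succ : ∀ m, q (m + 1) = r m + q m
  q_lt_r : ∀ m, q m < r m
  α_ne_zero : ∀ m j, q m ≤ j → j < r m → α j ≠ 0
  c_ne_zero : ∀ m, c m ≠ 0
  apply_zero : T (e 0) = α 1 • e 1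
  apply_of_lt_r : ∀ m j, q m ≤ j → j + 1 < r m → T (e j) = (α (j + 1) / α j) • e (j + 1)
  apply_r_sub_one : ∀ m, T (e (r m - 1)) = (α (r m - 1))⁻¹ • ((c m)⁻¹ • e (r m) + e 0)
  apply_of_r_le : ∀ m j, r m ≤ j → j + 1 < q (m + 1) → T (e j) = e (j + 1)
  apply_q_succ_sub_one : ∀ m, T (e (q (m + 1) - 1)) =
    (c m * α (q (m + 1))) • e (q (m + 1)) - (c m * α (q m)) • e (q m)

namespace IsGenerationOperator

variable {K V : Type*} [Field K] [AddCommGroup V] [Module K V]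
  {T : V →ₗ[K] V} {e : ℕ → V} {α c : ℕ → K} {q r : ℕ → ℕ}

theorem one_le_q (h : IsGenerationOperator T e α c q r) (m : ℕ) : 1 ≤ q m := by
  induction m with
  | zero => exact h.q_zero.ge
  | succ m ih => rw [h.q_succ]; omega

theorem q_lt_q_succ (h : IsGenerationOperator T e α c q r) (m : ℕ) : q m < q (m + 1) := by
  have := h.q_lt_r m
  rw [h.q_succ]; omega

theorem exists_q_le_of_pos (h : IsGenerationOperator T e α c q r) {k : ℕ} (hk : 1 ≤ k) :
    ∃ m, q m ≤ k ∧ k < q (m + 1) := by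
  induction k, hk using Nat.le_induction with
  | base => exact ⟨0, h.q_zero.le, h.q_zero ▸ h.q_lt_q_succ 0⟩
  | succ k _ ih =>
    obtain ⟨m, hmk, hkm⟩ := ih
    by_cases hlt : k + 1 < q (m + 1)
    · exact ⟨m, by omega, hlt⟩
    · exact ⟨m + 1, by omega, by have := h.q_lt_q_succ (m + 1); omega⟩

theorem eq_zero_or_lt_r_or_eq_r_add (h : IsGenerationOperator T e α c q r) (k : ℕ) :
    k = 0 ∨ (∃ m, q m ≤ k ∧ k < r m) ∨ ∃ m t, t < q m ∧ k = r m + t := by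
  rcases Nat.eq_zero_or_pos k with hk | hk
  · exact Or.inl hk
  obtain ⟨m, hmk, hkm⟩ := h.exists_q_le_of_pos hk
  rw [h.q_succ] at hkm
  by_cases hkr : k < r m
  · exact Or.inr (Or.inl ⟨m, hmk, hkr⟩)
  · exact Or.inr (Or.inr ⟨m, k - r m, by omega, by omega⟩)

theorem pow_apply_of_pow_q_apply (h : IsGenerationOperator T e α c q r) {m : ℕ}
    (hq : (T ^ q m) (e 0) = α (q m) • e (q m)) {j : ℕ} (hj : q m ≤ j) (hjr : j < r m) :
    (T ^ j) (e 0) = α j • e j := by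
  induction j, hj using Nat.le_induction with
  | base => exact hq
  | succ j hj ih =>
    rw [pow_succ_apply', ih (by omega), map_smul, h.apply_of_lt_r m j hj hjr, smul_smul,
      mul_div_cancel₀ _ (h.α_ne_zero m j hj (by omega))]

theorem pow_r_add_apply_of_pow_q_apply (h : IsGenerationOperator T e α c q r) {m : ℕ}
    (hq : (T ^ q m) (e 0) = α (q m) • e (q m)) {t : ℕ} (ht : t < q m) :
    (T ^ (r m + t)) (e 0) = (c m)⁻¹ • e (r m + t) + (T ^ t) (e 0) := by
  have hqr := h.q_lt_r m
  induction t with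
  | zero =>
    have hr : (T ^ r m) (e 0) = T ((T ^ (r m - 1)) (e 0)) := by
      rw [← pow_succ_apply', Nat.sub_add_cancel (by omega)]
    rw [Nat.add_zero, hr, h.pow_apply_of_pow_q_apply hq (by omega) (by omega), map_smul,
      h.apply_r_sub_one, smul_smul, mul_inv_cancel₀, one_smul, pow_zero, Module.End.one_apply]
    exact h.α_ne_zero m (r m - 1) (by omega) (by omega)
  | succ t ih =>
    rw [← Nat.add_assoc, pow_succ_apply', ih (by omega), map_add, map_smul,
      h.apply_of_r_le m _ (by omega) (by rw [h.q_succ]; omega), ← pow_succ_apply']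

theorem pow_q_succ_apply_of_pow_q_apply (h : IsGenerationOperator T e α c q r) {m : ℕ}
    (hq : (T ^ q m) (e 0) = α (q m) • e (q m)) :
    (T ^ q (m + 1)) (e 0) = α (q (m + 1)) • e (q (m + 1)) := by
  have h1 := h.one_le_q m
  have hlast : r m + (q m - 1) = q (m + 1) - 1 := by rw [h.q_succ]; omega
  have hstep : (T ^ q (m + 1)) (e 0) = T ((T ^ (r m + (q m - 1))) (e 0)) := by
    rw [← pow_succ_apply', hlast, Nat.sub_add_cancel (by rw [h.q_succ]; omega)]
  have hprev : T ((T ^ (q m - 1)) (e 0)) = (T ^ q m) (e 0) := by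
    rw [← pow_succ_apply', Nat.sub_add_cancel h1]
  rw [hstep, h.pow_r_add_apply_of_pow_q_apply hq (by omega), map_add, map_smul, hprev, hq, hlast,
    h.apply_q_succ_sub_one, smul_sub, smul_smul, smul_smul, inv_mul_cancel_left₀ (h.c_ne_zero m),
    inv_mul_cancel_left₀ (h.c_ne_zero m), sub_add_cancel]

theorem pow_q_apply (h : IsGenerationOperator T e α c q r) (m : ℕ) :
    (T ^ q m) (e 0) = α (q m) • e (q m) := by
  induction m with
  | zero => rw [h.q_zero, pow_one]; exact h.apply_zero
  | succ m ih => exact h.pow_q_succ_apply_of_pow_q_apply ih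

theorem pow_apply_of_lt_r (h : IsGenerationOperator T e α c q r) {m j : ℕ} (hj : q m ≤ j)
    (hjr : j < r m) : (T ^ j) (e 0) = α j • e j :=
  h.pow_apply_of_pow_q_apply (h.pow_q_apply m) hj hjr

theorem pow_r_add_apply (h : IsGenerationOperator T e α c q r) {m t : ℕ} (ht : t < q m) :
    (T ^ (r m + t)) (e 0) = (c m)⁻¹ • e (r m + t) + (T ^ t) (e 0) :=
  h.pow_r_add_apply_of_pow_q_apply (h.pow_q_apply m) ht

theorem mem_span_pow_apply (h : IsGenerationOperator T e α c q r) (k : ℕ) :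
    e k ∈ Submodule.span K ((fun j => (T ^ j) (e 0)) '' Set.Iic k) := by
  rcases h.eq_zero_or_lt_r_or_eq_r_add k with rfl | ⟨m, hmk, hkr⟩ | ⟨m, t, ht, rfl⟩
  · exact Submodule.subset_span ⟨0, Set.self_mem_Iic, rfl⟩
  · have he : e k = (α k)⁻¹ • (T ^ k) (e 0) := by
      rw [h.pow_apply_of_lt_r hmk hkr, smul_smul, inv_mul_cancel₀ (h.α_ne_zero m k hmk hkr),
        one_smul]
    rw [he]
    exact Submodule.smul_mem _ _ (Submodule.subset_span ⟨k, Set.self_mem_Iic, rfl⟩)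
  · have he : e (r m + t) = c m • (T ^ (r m + t)) (e 0) - c m • (T ^ t) (e 0) := by
      rw [h.pow_r_add_apply ht, smul_add, smul_smul, mul_inv_cancel₀ (h.c_ne_zero m), one_smul,
        add_sub_cancel_right]
    rw [he]
    exact sub_mem (Submodule.smul_mem _ _ (Submodule.subset_span ⟨_, Set.self_mem_Iic, rfl⟩))
      (Submodule.smul_mem _ _ (Submodule.subset_span ⟨t, Set.mem_Iic.2 (by omega), rfl⟩))

open Finset in
theorem apply_sum_smul_of_truncation (h : IsGenerationOperator T e α c q r) {τ : V →ₗ[K] V}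
    {n : ℕ} (hτ : ∀ y : ℕ → K, τ (∑ j ∈ range (q (n + 1)), y j • (T ^ j) (e 0)) =
      ∑ j ∈ range (r n), y j • (T ^ j) (e 0)) (ξ : ℕ → K) :
    τ (∑ k ∈ range (q (n + 1)), ξ k • e k) =
      ∑ k ∈ range (r n), ξ k • e k - ∑ t ∈ range (q n), (c n * ξ (r n + t)) • (T ^ t) (e 0) := by
  set z := ∑ k ∈ range (r n), ξ k • e k -
    ∑ t ∈ range (q n), (c n * ξ (r n + t)) • (T ^ t) (e 0) with hz_def
  have hz : z ∈ Submodule.span K ((fun j => (T ^ j) (e 0)) '' ↑(range (r n))) := by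
    have hIic : ∀ k ∈ range (r n), Set.Iic k ⊆ ↑(range (r n)) := fun k hk j hj => by
      simp only [coe_range, Set.mem_Iio, Set.mem_Iic, mem_range] at hj hk ⊢; omega
    refine sub_mem (Submodule.sum_mem _ fun k hk => Submodule.smul_mem _ _
      (Submodule.span_mono (Set.image_mono (hIic k hk)) (h.mem_span_pow_apply k)))
      (Submodule.sum_mem _ fun t ht => Submodule.smul_mem _ _ (Submodule.subset_span ⟨t, ?_, rfl⟩))
    have := h.q_lt_r n
    simp only [coe_range, Set.mem_Iio, mem_range] at ht ⊢; omega
  -- Expand the argument of `τ` in the vectors `(T ^ j) (e 0)`: the tail coefficients must be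
  -- `c n * ξ j`, and the head ones come from expanding `z`.
  obtain ⟨y, hy⟩ := (Submodule.mem_span_image_finset_iff_exists_fun' K).1 hz
  let y' : ℕ → K := fun j => if j < r n then y j else c n * ξ j
  have hhead : ∑ j ∈ range (r n), y' j • (T ^ j) (e 0) = z := by
    rw [← hy]
    exact sum_congr rfl fun j hj => by simp only [y', if_pos (mem_range.1 hj)]
  have htail : ∑ t ∈ range (q n), y' (r n + t) • (T ^ (r n + t)) (e 0) =
      ∑ t ∈ range (q n), ξ (r n + t) • e (r n + t) +
        ∑ t ∈ range (q n), (c n * ξ (r n + t)) • (T ^ t) (e 0) := by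
    rw [← sum_add_distrib]
    refine sum_congr rfl fun t ht => ?_
    simp only [y']
    rw [h.pow_r_add_apply (mem_range.1 ht), if_neg (by omega), smul_add, smul_smul,
      mul_right_comm, mul_inv_cancel₀ (h.c_ne_zero n), one_mul]
  have hx : ∑ k ∈ range (q (n + 1)), ξ k • e k =
      ∑ j ∈ range (q (n + 1)), y' j • (T ^ j) (e 0) := by
    rw [h.q_succ, sum_range_add, sum_range_add, hhead, htail, hz_def]
    abel
  rw [hx, hτ, hhead]

end IsGenerationOperator

theorem two_pow_add_four_pow_le {u N : ℕ} (h : u < N) : (2 : ℝ) ^ N + 4 ^ u ≤ 4 ^ N := by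
  obtain ⟨M, rfl⟩ : ∃ M, N = M + 1 := ⟨N - 1, by omega⟩
  have h2 : (2 : ℝ) ^ M ≤ 4 ^ M := pow_le_pow_left₀ zero_le_two (by norm_num) M
  have h4 : (4 : ℝ) ^ u ≤ 4 ^ M := pow_le_pow_right₀ (by norm_num) (by omega)
  rw [pow_succ, pow_succ]
  linarith [pow_nonneg (zero_le_four : (0 : ℝ) ≤ 4) M]

namespace IsGenerationOperator

variable {K V : Type*} [NormedField K] [AddCommGroup V] [Module K V]
  {T : V →ₗ[K] V} {e : ℕ → V} {α c : ℕ → K} {q r : ℕ → ℕ}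

theorem seminorm_pow_apply_le (h : IsGenerationOperator T e α c q r) (p : Seminorm K V) {C : ℝ}
    (he : ∀ k, p (e k) ≤ 2 ^ k * C) (hα : ∀ m j, q m ≤ j → j < r m → ‖α j‖ ≤ 2 ^ j)
    (hc : ∀ m, 1 ≤ ‖c m‖) (t : ℕ) : p ((T ^ t) (e 0)) ≤ 4 ^ t * C := by
  have hC : 0 ≤ C := by simpa using (apply_nonneg p (e 0)).trans (he 0)
  induction t using Nat.strong_induction_on with
  | _ t ih =>
  rcases h.eq_zero_or_lt_r_or_eq_r_add t with rfl | ⟨m, hmt, htr⟩ | ⟨m, u, hu, rfl⟩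
  · simpa using he 0
  · rw [h.pow_apply_of_lt_r hmt htr, map_smul_eq_mul]
    calc ‖α t‖ * p (e t) ≤ 2 ^ t * (2 ^ t * C) :=
          mul_le_mul (hα m t hmt htr) (he t) (apply_nonneg p _) (by positivity)
      _ = 4 ^ t * C := by rw [← mul_assoc, ← mul_pow]; norm_num
  · have hr := h.q_lt_r m
    have hcoef : ‖(c m)⁻¹‖ ≤ 1 := by rw [norm_inv]; exact inv_le_one_of_one_le₀ (hc m)
    calc p ((T ^ (r m + u)) (e 0)) ≤ ‖(c m)⁻¹‖ * p (e (r m + u)) + p ((T ^ u) (e 0)) := by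
          rw [h.pow_r_add_apply hu, ← map_smul_eq_mul]; exact map_add_le_add p _ _
      _ ≤ 1 * (2 ^ (r m + u) * C) + 4 ^ u * C :=
          add_le_add (mul_le_mul hcoef (he _) (apply_nonneg p _) zero_le_one) (ih u (by omega))
      _ ≤ 4 ^ (r m + u) * C := by
          rw [one_mul, ← add_mul]
          exact mul_le_mul_of_nonneg_right (two_pow_add_four_pow_le (by omega)) hC

open Finset in
theorem seminorm_apply_sum_smul_le (h : IsGenerationOperator T e α c q r) (p : Seminorm K V) {C : ℝ}
    (he : ∀ k, p (e k) ≤ 2 ^ k * C) (hα : ∀ m j, q m ≤ j → j < r m → ‖α j‖ ≤ 2 ^ j)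
    (hc : ∀ m, 1 ≤ ‖c m‖) {τ : V →ₗ[K] V} {n : ℕ}
    (hτ : ∀ y : ℕ → K, τ (∑ j ∈ range (q (n + 1)), y j • (T ^ j) (e 0)) =
      ∑ j ∈ range (r n), y j • (T ^ j) (e 0)) (ξ : ℕ → K) :
    p (τ (∑ k ∈ range (q (n + 1)), ξ k • e k)) ≤
      ∑ k ∈ range (r n), ‖ξ k‖ * p (e k) +
        ∑ t ∈ range (q n), ‖ξ (r n + t)‖ * (‖c n‖ * 4 ^ t * C) := by
  have hsum : ∀ {ι : Type _} (s : Finset ι) (v : ι → V), p (∑ i ∈ s, v i) ≤ ∑ i ∈ s, p (v i) :=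
    fun s v => le_sum_of_subadditive p (map_zero p).le (map_add_le_add p) s v
  rw [h.apply_sum_smul_of_truncation hτ]
  refine (map_sub_le_add p _ _).trans (add_le_add ?_ ?_)
  · exact (hsum _ _).trans_eq (sum_congr rfl fun k _ => map_smul_eq_mul p _ _)
  · refine (hsum _ _).trans (sum_le_sum fun t _ => ?_)
    rw [map_smul_eq_mul, norm_mul, mul_comm ‖c n‖, mul_assoc, mul_assoc]
    gcongr
    exact h.seminorm_pow_apply_le p he hα hc t

end IsGenerationOperator

theorem alpha_pos_and_le_two_pow {α c D : ℕ → ℝ} {Q R S : ℕ → ℕ} (hc : ∀ m, 1 ≤ c m)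
    (hD : ∀ m, 1 ≤ D m) (hQS : ∀ m, 1 ≤ m → Q m < S m)
    (hα0 : ∀ j, Q 0 ≤ j → j < R 0 → α j = (2 : ℝ) ^ (j - Q 0) / c 0)
    (hα1 : ∀ n j, 1 ≤ n → Q n ≤ j → j < S n →
      α j = (1 / c n) * ((2 * D (n - 1)) ^ (j - Q n))⁻¹)
    (hα2 : ∀ n j, 1 ≤ n → S n ≤ j → j < R n → α j = α (S n - 1) * 2 ^ (j - S n))
    {m j : ℕ} (hj : Q m ≤ j) (hjr : j < R m) : 0 < α j ∧ α j ≤ 2 ^ j := by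
  have hcpos : ∀ m, 0 < c m := fun m => one_pos.trans_le (hc m)
  have hhead : ∀ m j, 1 ≤ m → Q m ≤ j → j < S m → 0 < α j ∧ α j ≤ 1 := by
    intro m j hm hj hjs
    have hpow : 1 ≤ (2 * D (m - 1)) ^ (j - Q m) := one_le_pow₀ (by linarith [hD (m - 1)])
    rw [hα1 m j hm hj hjs]
    exact ⟨mul_pos (one_div_pos.2 (hcpos m)) (inv_pos.2 (one_pos.trans_le hpow)),
      mul_le_one₀ ((div_le_one (hcpos m)).2 (hc m)) (inv_nonneg.2 (zero_le_one.trans hpow))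
        (inv_le_one_of_one_le₀ hpow)⟩
  have hpow_mono : ∀ i ≤ j, (2 : ℝ) ^ i ≤ 2 ^ j := fun i hi => pow_le_pow_right₀ one_le_two hi
  rcases m with _ | m
  · rw [hα0 j hj hjr]
    exact ⟨div_pos (by positivity) (hcpos 0),
      (div_le_self (by positivity) (hc 0)).trans (hpow_mono _ (Nat.sub_le _ _))⟩
  by_cases hjs : j < S (m + 1)
  · obtain ⟨hpos, hle⟩ := hhead (m + 1) j (by omega) hj hjs
    exact ⟨hpos, hle.trans (one_le_pow₀ one_le_two)⟩
  · have hQS' := hQS (m + 1) (by omega)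
    obtain ⟨hpos, hle⟩ := hhead (m + 1) (S (m + 1) - 1) (by omega) (by omega) (by omega)
    rw [hα2 (m + 1) j (by omega) (by omega) hjr]
    exact ⟨mul_pos hpos (by positivity),
      (mul_le_of_le_one_left (by positivity) hle).trans (hpow_mono _ (Nat.sub_le _ _))⟩

section Positions

variable {b : ℕ → ℕ} {pos : ℕ × ℕ → ℕ}

theorem enum_pos (hpos : ∀ p k, pos p = k ↔ enum b k = p) (p : ℕ × ℕ) : enum b (pos p) = p :=
  (hpos p _).1 rfl

theorem enum_injective (hpos : ∀ p k, pos p = k ↔ enum b k = p) : Function.Injective (enum b) :=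
  fun k k' hk => ((hpos _ k).2 rfl).symm.trans ((hpos _ k').2 hk.symm)

theorem fst_le_pos (hpos : ∀ p k, pos p = k ↔ enum b k = p) (p : ℕ × ℕ) : p.1 ≤ pos p := by
  simpa only [enum_pos hpos] using fst_enum_le b (pos p)

theorem pos_one_zero (hpos : ∀ p k, pos p = k ↔ enum b k = p) (hb : ∀ n, 1 ≤ n → 0 < b n) :
    pos (1, 0) = 1 :=
  (hpos _ _).2 (by rw [enum_succ]; exact nextFn_of_forall_ne b fun m hm => (hb m hm).ne)

variable {a Δ : ℕ → ℕ}

/-- No `b n` lies in `[a m, Δ (m + 1))`, so `Next` walks straight along row `0` there. -/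
theorem enum_pos_add (hpos : ∀ p k, pos p = k ↔ enum b k = p)
    (hbmono : ∀ n, 1 ≤ n → b n < b (n + 1)) (hΔ : ∀ n, Δ (n + 1) = a n + pos (Δ n, 0))
    (hΔb : ∀ n, 1 ≤ n → Δ n < b n) (hba : ∀ n, 1 ≤ n → b n < a n) {m t : ℕ}
    (ht : t ≤ pos (Δ m, 0)) : enum b (pos (a m, 0) + t) = (a m + t, 0) := by
  have hb_le : ∀ n n', 1 ≤ n → n ≤ n' → b n ≤ b n' := fun n n' hn hnn' => by
    induction n', hnn' using Nat.le_induction with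
    | base => exact le_rfl
    | succ k hk ih => exact ih.trans (hbmono k (by omega)).le
  refine enum_add_of_forall_ne b (enum_pos hpos _) fun u hu n hn => ?_
  rcases le_or_gt n m with hnm | hmn
  · have := hb_le n m hn hnm
    have := hba m (by omega)
    omega
  · have := hb_le (m + 1) n (by omega) hmn
    have := hΔb (m + 1) (by omega)
    have := hΔ m
    omega

theorem pos_Δ_succ (hpos : ∀ p k, pos p = k ↔ enum b k = p)
    (hbmono : ∀ n, 1 ≤ n → b n < b (n + 1)) (hΔ : ∀ n, Δ (n + 1) = a n + pos (Δ n, 0))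
    (hΔb : ∀ n, 1 ≤ n → Δ n < b n) (hba : ∀ n, 1 ≤ n → b n < a n) (m : ℕ) :
    pos (Δ (m + 1), 0) = pos (a m, 0) + pos (Δ m, 0) :=
  (hpos _ _).2 (by rw [enum_pos_add hpos hbmono hΔ hΔb hba le_rfl, hΔ])

theorem pos_Δ_lt_pos_a (hpos : ∀ p k, pos p = k ↔ enum b k = p) (hb : ∀ n, 1 ≤ n → 0 < b n)
    (hΔ0 : Δ 0 = 1) (ha0 : Δ 0 < a 0) (hbΔ : ∀ n, 1 ≤ n → 2 * pos (Δ n, 0) ≤ b n)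
    (hba : ∀ n, 1 ≤ n → b n < a n) (m : ℕ) : pos (Δ m, 0) < pos (a m, 0) := by
  refine lt_of_lt_of_le ?_ (fst_le_pos hpos (a m, 0))
  rcases m with _ | m
  · rw [hΔ0, pos_one_zero hpos hb]; omega
  · have := hbΔ (m + 1) (by omega)
    have := hba (m + 1) (by omega)
    omega

end Positions

theorem tau_estimate_general
    (A : ℕ → ℕ → ℝ) (b : ℕ → ℕ) (pos : ℕ × ℕ → ℕ)
    (Nn a s : ℕ → ℕ) (D : ℕ → ℝ) (Δ : ℕ → ℕ) (α : ℕ → ℝ)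
    (T : (ℕ × ℕ →₀ ℝ) →ₗ[ℝ] (ℕ × ℕ →₀ ℝ))
    (τ : ℕ → (ℕ × ℕ →₀ ℝ) →ₗ[ℝ] (ℕ × ℕ →₀ ℝ))
    (hA1 : ∀ N j, 1 ≤ A N j)
    (hA2m : ∀ j, Monotone fun N => A N j)
    (hA3m : ∀ N, Monotone fun j => A N j)
    (hA4 : ∀ N j, A N (j + 1) ≤ 2 * A N j)
    (hbpos : ∀ n, 1 ≤ n → 0 < b n)
    (hbmono : ∀ n, 1 ≤ n → b n < b (n + 1))
    (hpos : ∀ p k, pos p = k ↔ (nextFn b)^[k] (0, 0) = p)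
    (hD : ∀ n, 1 ≤ D n)
    (hΔ0 : Δ 0 = 1)
    (hΔ : ∀ n, Δ (n + 1) = a n + pos (Δ n, 0))
    (hord0 : Δ 0 < a 0 ∧ a 0 < Δ 1)
    (hord : ∀ n, 1 ≤ n → Δ n < b n ∧ 2 * b n < s n ∧ s n < a n ∧ a n < Δ (n + 1))
    (hbΔ : ∀ n, 1 ≤ n → 2 * pos (Δ n, 0) ≤ b n)
    (hc3 : ∀ n, A (Nn n) (a n) * 4 ^ pos (Δ n, 0) * A 0 0 ≤ A (Nn n + 1) (a n))
    (hα0 : ∀ j, pos (Δ 0, 0) ≤ j → j < pos (a 0, 0) →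
      α j = (2 : ℝ) ^ (j - pos (Δ 0, 0)) / A (Nn 0) (a 0))
    (hα1 : ∀ n j, 1 ≤ n → pos (Δ n, 0) ≤ j → j < pos (s n, 0) →
      α j = (1 / A (Nn n) (a n)) * ((2 * D (n - 1)) ^ (j - pos (Δ n, 0)))⁻¹)
    (hα2 : ∀ n j, 1 ≤ n → pos (s n, 0) ≤ j → j < pos (a n, 0) →
      α j = α (pos (s n, 0) - 1) * 2 ^ (j - pos (s n, 0)))
    (hT0 : T (eVec b 0) = α 1 • eVec b 1)
    (hTa : ∀ n j, pos (Δ n, 0) ≤ j → j + 1 < pos (a n, 0) →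
      T (eVec b j) = (α (j + 1) / α j) • eVec b (j + 1))
    (hTb : ∀ n : ℕ, T (eVec b (pos (a n, 0) - 1)) =
      (α (pos (a n, 0) - 1))⁻¹ • ((A (Nn n) (a n))⁻¹ • eVec b (pos (a n, 0)) + eVec b 0))
    (hTc : ∀ n j, pos (a n, 0) ≤ j → j + 1 < pos (Δ (n + 1), 0) →
      T (eVec b j) = eVec b (j + 1))
    (hTd : ∀ n : ℕ, T (eVec b (pos (Δ (n + 1), 0) - 1)) =
      (A (Nn n) (a n) * α (pos (Δ (n + 1), 0))) • eVec b (pos (Δ (n + 1), 0)) -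
        (A (Nn n) (a n) * α (pos (Δ n, 0))) • eVec b (pos (Δ n, 0)))
    (hτ : ∀ (n : ℕ) (y : ℕ → ℝ),
      τ n (∑ j ∈ Finset.range (pos (Δ (n + 1), 0)), y j • (T ^ j) (eVec b 0)) =
        ∑ j ∈ Finset.range (pos (a n, 0)), y j • (T ^ j) (eVec b 0))
    :
    ∀ n : ℕ, ∀ x ∈ Submodule.span ℝ (eVec b '' {j | j < pos (Δ (n + 1), 0)}),
      norm3 A 0 ⇑(τ n x) ≤ norm3 A (Nn n + 1) ⇑x := by
  have hA0 : ∀ N i, 0 ≤ A N i := fun N i => zero_le_one.trans (hA1 N i)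
  have hΔb : ∀ n, 1 ≤ n → Δ n < b n := fun n hn => (hord n hn).1
  have hba : ∀ n, 1 ≤ n → b n < a n := fun n hn => by have := hord n hn; omega
  have hα : ∀ m j, pos (Δ m, 0) ≤ j → j < pos (a m, 0) → 0 < α j ∧ α j ≤ 2 ^ j :=
    fun m j => alpha_pos_and_le_two_pow (c := fun m => A (Nn m) (a m))
      (Q := fun m => pos (Δ m, 0)) (R := fun m => pos (a m, 0)) (S := fun m => pos (s m, 0))
      (fun m => hA1 _ _) hD (fun m hm => by
        have := hbΔ m hm; have := hord m hm; have := fst_le_pos hpos (s m, 0); omega)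
      hα0 hα1 hα2
  have hG : IsGenerationOperator T (eVec b) α (fun m => A (Nn m) (a m))
      (fun m => pos (Δ m, 0)) (fun m => pos (a m, 0)) :=
    { q_zero := hΔ0 ▸ pos_one_zero hpos hbpos
      q_succ := pos_Δ_succ hpos hbmono hΔ hΔb hba
      q_lt_r := pos_Δ_lt_pos_a hpos hbpos hΔ0 hord0.1 hbΔ hba
      α_ne_zero := fun m j hj hjr => (hα m j hj hjr).1.ne'
      c_ne_zero := fun m => (one_pos.trans_le (hA1 _ _)).ne'
      apply_zero := hT0
      apply_of_lt_r := hTa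
      apply_r_sub_one := hTb
      apply_of_r_le := hTc
      apply_q_succ_sub_one := hTd }
  intro n x hx
  obtain ⟨ξ, rfl⟩ := (Submodule.mem_span_image_finset_iff_exists_fun' ℝ).1
    (by rwa [Finset.coe_range])
  have hest := hG.seminorm_apply_sum_smul_le (norm3Seminorm A 0 (hA0 0))
    (norm3_eVec_le_two_pow_mul (hA4 0) (hA0 0 0) b)
    (fun m j hj hjr => (Real.norm_of_nonneg (hα m j hj hjr).1.le).trans_le (hα m j hj hjr).2)
    (fun m => (hA1 _ _).trans_eq (Real.norm_of_nonneg (hA0 _ _)).symm) (hτ n) ξ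
  simp only [norm3Seminorm_apply, norm3_eVec, Real.norm_eq_abs, abs_of_nonneg (hA0 _ _)] at hest
  refine hest.trans ?_
  rw [norm3_sum_smul_eVec _ _ (enum_injective hpos), hG.q_succ, Finset.sum_range_add]
  refine add_le_add (Finset.sum_le_sum fun k _ => ?_) (Finset.sum_le_sum fun t ht => ?_)
  · exact mul_le_mul_of_nonneg_left (hA2m _ (Nat.zero_le _)) (abs_nonneg _)
  · have ht : t < pos (Δ n, 0) := Finset.mem_range.1 ht
    rw [enum_pos_add hpos hbmono hΔ hΔb hba ht.le]
    refine mul_le_mul_of_nonneg_left ?_ (abs_nonneg _)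
    calc A (Nn n) (a n) * 4 ^ t * A 0 0 ≤ A (Nn n) (a n) * 4 ^ pos (Δ n, 0) * A 0 0 :=
          mul_le_mul_of_nonneg_right (mul_le_mul_of_nonneg_left
            (pow_le_pow_right₀ (by norm_num) ht.le) (hA0 _ _)) (hA0 0 0)
      _ ≤ A (Nn n + 1) (a n) := hc3 n
      _ ≤ A (Nn n + 1) (a n + t) := hA3m _ (Nat.le_add_right _ _)

/-- For every `n` and every `x ∈ H_n`, `|||τ_n x|||₀ ≤ |||x|||_{N_n + 1}`. -/
theorem tau_estimate
    (A : ℕ → ℕ → ℝ) (b : ℕ → ℕ) (pos : ℕ × ℕ → ℕ)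
    (Nn a s : ℕ → ℕ) (D : ℕ → ℝ) (Δ : ℕ → ℕ) (α : ℕ → ℝ)
    (T : (ℕ × ℕ →₀ ℝ) →ₗ[ℝ] (ℕ × ℕ →₀ ℝ))
    (τ : ℕ → (ℕ × ℕ →₀ ℝ) →ₗ[ℝ] (ℕ × ℕ →₀ ℝ))
    (hA1 : ∀ N j, 1 ≤ A N j)
    (hA2m : ∀ j, Monotone fun N => A N j)
    (hA2u : ∀ j, ¬ BddAbove (Set.range fun N => A N j))
    (hA3m : ∀ N, Monotone fun j => A N j)
    (hA3u : ∀ N, ¬ BddAbove (Set.range fun j => A N j))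
    (hA4 : ∀ N j, A N (j + 1) ≤ 2 * A N j)
    (hA5 : ∀ N, Filter.Tendsto (fun j => A N j / A (N + 1) j) Filter.atTop (nhds 0))
    (hA6 : ∀ N, Filter.Tendsto (fun j => (2 : ℝ) ^ j / A N j) Filter.atTop Filter.atTop)
    (hbpos : ∀ n, 1 ≤ n → 0 < b n)
    (hbmono : ∀ n, 1 ≤ n → b n < b (n + 1))
    (hbgap : ∀ n, 1 ≤ n → 2 * b n + 1 < b (n + 1))
    (hpos : ∀ p k, pos p = k ↔ (nextFn b)^[k] (0, 0) = p)
    (hNle : ∀ n, Nn n ≤ n)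
    (hNinf : ∀ N m, ∃ n, m ≤ n ∧ Nn n = N)
    (hD : ∀ n, 1 ≤ D n)
    (hΔ0 : Δ 0 = 1)
    (hΔ : ∀ n, Δ (n + 1) = a n + pos (Δ n, 0))
    (hord0 : Δ 0 < a 0 ∧ a 0 < Δ 1)
    (hord : ∀ n, 1 ≤ n → Δ n < b n ∧ 2 * b n < s n ∧ s n < a n ∧ a n < Δ (n + 1))
    (hbΔ : ∀ n, 1 ≤ n → 2 * pos (Δ n, 0) ≤ b n)
    (hc2bn : ∀ n k, 1 ≤ n → b n ≤ k →
      (4 : ℝ) ^ pos (Δ n, 0) * A (Nn (n - 1) + 1) k ≤ A (Nn (n - 1) + 2) k / D (n - 1))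
    (hc1 : ∀ n, 1 ≤ n →
      A (Nn n) (a n) * (2 * D (n - 1)) ^ (pos (s n, 0) - pos (Δ n, 0) - 1) ≤
        (2 : ℝ) ^ (pos (a n, 0) - pos (s n, 0) - 1))
    (hc2 : ∀ n, 1 ≤ n → A (Nn (n - 1)) (a (n - 1)) ≤ A (Nn n) (a n))
    (hc4 : ∀ n, 1 ≤ n → D (n - 1) * A (Nn (n - 1)) (b n) ≤ A (Nn n) (a n))
    (hc3 : ∀ n, A (Nn n) (a n) * 4 ^ pos (Δ n, 0) * A 0 0 ≤ A (Nn n + 1) (a n))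
    (hc1' : A (Nn 0) (a 0) ≤ (2 : ℝ) ^ (pos (a 0, 0) - pos (Δ 0, 0) - 1))
    (hα0 : ∀ j, pos (Δ 0, 0) ≤ j → j < pos (a 0, 0) →
      α j = (2 : ℝ) ^ (j - pos (Δ 0, 0)) / A (Nn 0) (a 0))
    (hα1 : ∀ n j, 1 ≤ n → pos (Δ n, 0) ≤ j → j < pos (s n, 0) →
      α j = (1 / A (Nn n) (a n)) * ((2 * D (n - 1)) ^ (j - pos (Δ n, 0)))⁻¹)
    (hα2 : ∀ n j, 1 ≤ n → pos (s n, 0) ≤ j → j < pos (a n, 0) →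
      α j = α (pos (s n, 0) - 1) * 2 ^ (j - pos (s n, 0)))
    (hT0 : T (eVec b 0) = α 1 • eVec b 1)
    (hTa : ∀ n j, pos (Δ n, 0) ≤ j → j + 1 < pos (a n, 0) →
      T (eVec b j) = (α (j + 1) / α j) • eVec b (j + 1))
    (hTb : ∀ n : ℕ, T (eVec b (pos (a n, 0) - 1)) =
      (α (pos (a n, 0) - 1))⁻¹ • ((A (Nn n) (a n))⁻¹ • eVec b (pos (a n, 0)) + eVec b 0))
    (hTc : ∀ n j, pos (a n, 0) ≤ j → j + 1 < pos (Δ (n + 1), 0) →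
      T (eVec b j) = eVec b (j + 1))
    (hTd : ∀ n : ℕ, T (eVec b (pos (Δ (n + 1), 0) - 1)) =
      (A (Nn n) (a n) * α (pos (Δ (n + 1), 0))) • eVec b (pos (Δ (n + 1), 0)) -
        (A (Nn n) (a n) * α (pos (Δ n, 0))) • eVec b (pos (Δ n, 0)))
    (hτ : ∀ (n : ℕ) (y : ℕ → ℝ),
      τ n (∑ j ∈ Finset.range (pos (Δ (n + 1), 0)), y j • (T ^ j) (eVec b 0)) =
        ∑ j ∈ Finset.range (pos (a n, 0)), y j • (T ^ j) (eVec b 0))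
    :
    ∀ n : ℕ, ∀ x ∈ Submodule.span ℝ (eVec b '' {j | j < pos (Δ (n + 1), 0)}),
      norm3 A 0 ⇑(τ n x) ≤ norm3 A (Nn n + 1) ⇑x :=
  tau_estimate_general A b pos Nn a s D Δ α T τ hA1 hA2m hA3m hA4 hbpos hbmono hpos hD hΔ0 hΔ hord0
    hord hbΔ hc3 hα0 hα1 hα2 hT0 hTa hTb hTc hTd hτ
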